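/- The Arnold class of families is closed under composition: if (f_a)_a and (g_a)_a are in C^{d,r}_A(𝕀^k, M, M) (i.e. all mixed partials ∂_a^i∂_z^j exist continuously for i ≤ d, i+j ≤ r), then the composed family (f_a ∘ g_a)_a also lies in C^{d,r}_A(𝕀^k, M, M). -/

import Mathlib

/-!
Every mixed partial `∂_a^i ∂_z^j` of `(a, z) ↦ f_a (g_a z)` is a universal integer polynomial in
the partials `∂_a^p ∂_z^q f` taken at `(a, g_a z)` and the partials `∂_a^p ∂_z^q g` taken at
`(a, z)`: apply `i` times the formal total `a`-derivative and `j` times the formal total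
`z`-derivative to the variable standing for `f`. The two formal derivations commute (it suffices to
check this on the variables), which makes the resulting system of partials coherent, and they raise
orders exactly as `(i, j)` grows, so only partials of `a`-order `≤ i` and total order `≤ i + j`
occur. The formal `a`-derivative is realised by the two-variable chain rule, which applies because
both first partials of `∂_a^p ∂_z^q f` are continuous.
-/

/-- Membership of a family `f : a ↦ f_a` (here `f : ℝ → ℝ → ℝ`, parameter first, phase
variable second, with `M = ℝ` and `k = 1`) in the regularity class determined by a set
`S` of bi-indices `(i,j)`: there is a coherent system `D i j` of mixed partial derivatives
`∂_a^i ∂_z^j f_a(z)`, existing for all `(i,j) ∈ S` and jointly continuous there. -/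
def MemClass (S : ℕ → ℕ → Prop) (f : ℝ → ℝ → ℝ) : Prop :=
  ∃ D : ℕ → ℕ → ℝ → ℝ → ℝ,
    D 0 0 = f ∧
    (∀ i j, S (i + 1) j → ∀ a z,
      HasDerivAt (fun a' => D i j a' z) (D (i + 1) j a z) a) ∧
    (∀ i j, S i (j + 1) → ∀ a z,
      HasDerivAt (fun z' => D i j a z') (D i (j + 1) a z) z) ∧
    (∀ i j, S i j → Continuous fun p : ℝ × ℝ => D i j p.1 p.2)

/-- The Arnold class `C^{d,r}_A`: mixed partials `∂_a^i∂_z^j` exist continuously for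
`i ≤ d` and `i + j ≤ r`. -/
def ClassA (d r : ℕ) (f : ℝ → ℝ → ℝ) : Prop :=
  MemClass (fun i j => i ≤ d ∧ i + j ≤ r) f

open Function MvPolynomial

structure IsMixedPartials (S : ℕ → ℕ → Prop) (D : ℕ → ℕ → ℝ → ℝ → ℝ) : Prop where
  hasDerivAt_fst : ∀ i j, S (i + 1) j → ∀ a z,
    HasDerivAt (fun a' => D i j a' z) (D (i + 1) j a z) a
  hasDerivAt_snd : ∀ i j, S i (j + 1) → ∀ a z,
    HasDerivAt (fun z' => D i j a z') (D i (j + 1) a z) z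
  continuous : ∀ i j, S i j → Continuous fun p : ℝ × ℝ => D i j p.1 p.2

theorem memClass_iff {S : ℕ → ℕ → Prop} {f : ℝ → ℝ → ℝ} :
    MemClass S f ↔ ∃ D, D 0 0 = f ∧ IsMixedPartials S D :=
  ⟨fun ⟨D, h0, hA, hZ, hC⟩ => ⟨D, h0, hA, hZ, hC⟩, fun ⟨D, h0, hA, hZ, hC⟩ => ⟨D, h0, hA, hZ, hC⟩⟩

theorem Derivation.map_mem_of_mem_adjoin {R A : Type*} [CommSemiring R] [CommSemiring A]
    [Algebra R A] (D : Derivation R A A) {s : Set A} {T : Subalgebra R A} (hsT : s ⊆ T)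
    (hD : ∀ x ∈ s, D x ∈ T) {x : A} (hx : x ∈ Algebra.adjoin R s) : D x ∈ T := by
  induction hx using Algebra.adjoin_induction with
  | mem x hx => exact hD x hx
  | algebraMap r => simp
  | add x y _ _ hx hy => simpa using add_mem hx hy
  | mul x y hx' hy' hx hy =>
    have hle := Algebra.adjoin_le (S := T) hsT
    simpa using add_mem (mul_mem (hle hx') hy) (mul_mem (hle hy') hx)

namespace MvPolynomial

variable {σ R : Type*} [CommSemiring R] {s : Set σ} {P : MvPolynomial σ R}

theorem continuous_aeval_of_mem_adjoin {Y A : Type*} [TopologicalSpace Y] [CommSemiring A]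
    [TopologicalSpace A] [IsTopologicalSemiring A] [Algebra R A] {x : Y → σ → A}
    (hx : ∀ v ∈ s, Continuous fun y => x y v) (hP : P ∈ Algebra.adjoin R (X '' s)) :
    Continuous fun y => aeval (x y) P := by
  induction hP using Algebra.adjoin_induction with
  | mem _ hP =>
    obtain ⟨v, hv, rfl⟩ := hP
    simpa using hx v hv
  | algebraMap r => simpa using continuous_const
  | add _ _ _ _ hP hQ => simp_rw [map_add]; exact hP.add hQ
  | mul _ _ _ _ hP hQ => simp_rw [map_mul]; exact hP.mul hQ

theorem hasDerivAt_aeval_of_mem_adjoin {𝕜 : Type*} [NontriviallyNormedField 𝕜] [Algebra R 𝕜]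
    (D : Derivation R (MvPolynomial σ R) (MvPolynomial σ R)) {x : 𝕜 → σ → 𝕜} {t : 𝕜}
    (hx : ∀ v ∈ s, HasDerivAt (fun t => x t v) (aeval (x t) (D (X v))) t)
    (hP : P ∈ Algebra.adjoin R (X '' s)) :
    HasDerivAt (fun t => aeval (x t) P) (aeval (x t) (D P)) t := by
  induction hP using Algebra.adjoin_induction with
  | mem _ hP =>
    obtain ⟨v, hv, rfl⟩ := hP
    simpa using hx v hv
  | algebraMap r => simpa using hasDerivAt_const t _
  | add _ _ _ _ hP hQ => simp_rw [map_add]; exact hP.add hQ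
  | mul _ _ _ _ hP hQ =>
    simp_rw [Derivation.leibniz, map_add, smul_eq_mul, map_mul]
    exact (hP.mul hQ).congr_deriv (by ring)

end MvPolynomial

theorem HasDerivAt.comp_uncurry_of_continuous_partials {F Fa Fz : ℝ → ℝ → ℝ} {u : ℝ → ℝ}
    {t u' : ℝ} (hFa : ∀ a z, HasDerivAt (F · z) (Fa a z) a)
    (hFz : ∀ a z, HasDerivAt (F a ·) (Fz a z) z)
    (hFa_cont : ContinuousAt (uncurry Fa) (t, u t)) (hFz_cont : ContinuousAt (uncurry Fz) (t, u t))
    (hu : HasDerivAt u u' t) :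
    HasDerivAt (fun t => F t (u t)) (Fa t (u t) + Fz t (u t) * u') t := by
  have hline : Continuous fun c : ℝ => (1 : ℝ →L[ℝ] ℝ).smulRight c :=
    (ContinuousLinearMap.smulRightL ℝ ℝ ℝ 1).continuous
  have hF := hasStrictFDerivAt_uncurry_coprod (u := (t, u t))
    (f₁ := fun a z => (1 : ℝ →L[ℝ] ℝ).smulRight (Fa a z))
    (f₂ := fun a z => (1 : ℝ →L[ℝ] ℝ).smulRight (Fz a z))
    (.of_forall fun v => (hFa v.1 v.2).hasFDerivAt)
    (.of_forall fun v => (hFz v.1 v.2).hasFDerivAt)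
    (hline.continuousAt.comp hFa_cont) (hline.continuousAt.comp hFz_cont)
  simpa [Function.comp_def, Function.HasUncurry.uncurry, mul_comm] using
    hF.hasFDerivAt.comp_hasDerivAt t ((hasDerivAt_id t).prodMk hu)

noncomputable section

namespace JetComp

inductive JetVar
  | fJet (p q : ℕ)
  | gJet (p q : ℕ)

open JetVar

def JetVar.order : JetVar → ℕ × ℕ
  | fJet p q | gJet p q => (p, q)

def lowOrderVars (i j : ℕ) : Set JetVar :=
  {v | v.order.1 ≤ i ∧ v.order.1 + v.order.2 ≤ i + j}

theorem forall_mem_lowOrderVars {i j : ℕ} {P : JetVar → Prop}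
    (h : ∀ p q, p ≤ i → p + q ≤ i + j → P (fJet p q) ∧ P (gJet p q)) :
    ∀ v ∈ lowOrderVars i j, P v
  | fJet p q, ⟨hp, hpq⟩ => (h p q hp hpq).1
  | gJet p q, ⟨hp, hpq⟩ => (h p q hp hpq).2

abbrev JetPoly := MvPolynomial JetVar ℤ

def jetSubalgebra (i j : ℕ) : Subalgebra ℤ JetPoly :=
  Algebra.adjoin ℤ (X '' lowOrderVars i j)

theorem jetSubalgebra_mono {i j i' j' : ℕ} (hi : i ≤ i') (hij : i + j ≤ i' + j') :
    jetSubalgebra i j ≤ jetSubalgebra i' j' :=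
  Algebra.adjoin_mono <| Set.image_mono fun _ ⟨h₁, h₂⟩ => ⟨h₁.trans hi, h₂.trans hij⟩

theorem X_fJet_mem {i j p q : ℕ} (hp : p ≤ i) (hpq : p + q ≤ i + j) :
    X (fJet p q) ∈ jetSubalgebra i j :=
  Algebra.subset_adjoin ⟨fJet p q, ⟨hp, hpq⟩, rfl⟩

theorem X_gJet_mem {i j p q : ℕ} (hp : p ≤ i) (hpq : p + q ≤ i + j) :
    X (gJet p q) ∈ jetSubalgebra i j :=
  Algebra.subset_adjoin ⟨gJet p q, ⟨hp, hpq⟩, rfl⟩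

def totalDerivA : Derivation ℤ JetPoly JetPoly :=
  mkDerivation ℤ fun
    | fJet p q => X (fJet (p + 1) q) + X (fJet p (q + 1)) * X (gJet 1 0)
    | gJet p q => X (gJet (p + 1) q)

def totalDerivZ : Derivation ℤ JetPoly JetPoly :=
  mkDerivation ℤ fun
    | fJet p q => X (fJet p (q + 1)) * X (gJet 0 1)
    | gJet p q => X (gJet p (q + 1))

@[simp] theorem totalDerivA_X_fJet (p q : ℕ) :
    totalDerivA (X (fJet p q)) = X (fJet (p + 1) q) + X (fJet p (q + 1)) * X (gJet 1 0) :=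
  mkDerivation_X ..

@[simp] theorem totalDerivA_X_gJet (p q : ℕ) :
    totalDerivA (X (gJet p q)) = X (gJet (p + 1) q) :=
  mkDerivation_X ..

@[simp] theorem totalDerivZ_X_fJet (p q : ℕ) :
    totalDerivZ (X (fJet p q)) = X (fJet p (q + 1)) * X (gJet 0 1) :=
  mkDerivation_X ..

@[simp] theorem totalDerivZ_X_gJet (p q : ℕ) :
    totalDerivZ (X (gJet p q)) = X (gJet p (q + 1)) :=
  mkDerivation_X ..

theorem commute_totalDerivA_totalDerivZ : Function.Commute ⇑totalDerivA ⇑totalDerivZ := fun P => by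
  have hbracket : ⁅totalDerivA, totalDerivZ⁆ = 0 := by
    refine derivation_ext fun v => ?_
    cases v
    · simp only [Derivation.commutator_apply, Derivation.leibniz, totalDerivA_X_fJet,
        totalDerivZ_X_fJet, totalDerivA_X_gJet, totalDerivZ_X_gJet, map_add, smul_eq_mul,
        Derivation.zero_apply]
      ring
    · simp [Derivation.commutator_apply]
  rw [← sub_eq_zero, ← Derivation.commutator_apply, hbracket, Derivation.zero_apply]

theorem totalDerivA_mem {i j : ℕ} {P : JetPoly} (hP : P ∈ jetSubalgebra i j) :
    totalDerivA P ∈ jetSubalgebra (i + 1) j := by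
  refine totalDerivA.map_mem_of_mem_adjoin
    (fun _ hP => jetSubalgebra_mono (by omega) (by omega) (Algebra.subset_adjoin hP))
    (Set.forall_mem_image.2 <| forall_mem_lowOrderVars fun p q hp hpq => ⟨?_, ?_⟩) hP
  · exact (totalDerivA_X_fJet p q).symm ▸ add_mem (X_fJet_mem (by omega) (by omega))
      (mul_mem (X_fJet_mem (by omega) (by omega)) (X_gJet_mem (by omega) (by omega)))
  · exact (totalDerivA_X_gJet p q).symm ▸ X_gJet_mem (by omega) (by omega)

theorem totalDerivZ_mem {i j : ℕ} {P : JetPoly} (hP : P ∈ jetSubalgebra i j) :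
    totalDerivZ P ∈ jetSubalgebra i (j + 1) := by
  refine totalDerivZ.map_mem_of_mem_adjoin
    (fun _ hP => jetSubalgebra_mono le_rfl (by omega) (Algebra.subset_adjoin hP))
    (Set.forall_mem_image.2 <| forall_mem_lowOrderVars fun p q hp hpq => ⟨?_, ?_⟩) hP
  · exact (totalDerivZ_X_fJet p q).symm ▸
      mul_mem (X_fJet_mem (by omega) (by omega)) (X_gJet_mem (by omega) (by omega))
  · exact (totalDerivZ_X_gJet p q).symm ▸ X_gJet_mem (by omega) (by omega)

def jetPoly (i j : ℕ) : JetPoly :=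
  totalDerivA^[i] (totalDerivZ^[j] (X (fJet 0 0)))

theorem jetPoly_succ_left (i j : ℕ) : jetPoly (i + 1) j = totalDerivA (jetPoly i j) :=
  iterate_succ_apply' ..

theorem jetPoly_succ_right (i j : ℕ) : jetPoly i (j + 1) = totalDerivZ (jetPoly i j) := by
  rw [jetPoly, iterate_succ_apply']
  exact commute_totalDerivA_totalDerivZ.iterate_left i _

theorem jetPoly_mem (i j : ℕ) : jetPoly i j ∈ jetSubalgebra i j := by
  induction i with
  | zero =>
    induction j with
    | zero => exact X_fJet_mem le_rfl le_rfl
    | succ j ih => exact jetPoly_succ_right 0 j ▸ totalDerivZ_mem ih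
  | succ i ih => exact jetPoly_succ_left i j ▸ totalDerivA_mem ih

section Evaluation

variable (Df Dg : ℕ → ℕ → ℝ → ℝ → ℝ)

def jetEval (a z : ℝ) : JetVar → ℝ
  | fJet p q => Df p q a (Dg 0 0 a z)
  | gJet p q => Dg p q a z

def compPartials (i j : ℕ) (a z : ℝ) : ℝ :=
  aeval (jetEval Df Dg a z) (jetPoly i j)

theorem compPartials_zero_zero : compPartials Df Dg 0 0 = fun a z => Df 0 0 a (Dg 0 0 a z) := by
  ext a z
  simp [compPartials, jetPoly, jetEval]

variable {d r : ℕ} {Df Dg} (hf : IsMixedPartials (fun i j => i ≤ d ∧ i + j ≤ r) Df)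
  (hg : IsMixedPartials (fun i j => i ≤ d ∧ i + j ≤ r) Dg)
include hf hg

theorem continuous_aeval_jetEval {i j : ℕ} (hi : i ≤ d) (hij : i + j ≤ r) {P : JetPoly}
    (hP : P ∈ jetSubalgebra i j) : Continuous fun x : ℝ × ℝ => aeval (jetEval Df Dg x.1 x.2) P :=
  continuous_aeval_of_mem_adjoin (forall_mem_lowOrderVars fun p q hp hpq =>
    ⟨(hf.continuous p q ⟨by omega, by omega⟩).comp
      (continuous_fst.prodMk (hg.continuous 0 0 ⟨by omega, by omega⟩)),
    hg.continuous p q ⟨by omega, by omega⟩⟩) hP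

theorem hasDerivAt_aeval_jetEval_fst {i j : ℕ} (hi : i + 1 ≤ d) (hij : i + 1 + j ≤ r)
    {P : JetPoly} (hP : P ∈ jetSubalgebra i j) (a z : ℝ) :
    HasDerivAt (fun a' => aeval (jetEval Df Dg a' z) P)
      (aeval (jetEval Df Dg a z) (totalDerivA P)) a :=
  hasDerivAt_aeval_of_mem_adjoin totalDerivA (forall_mem_lowOrderVars fun p q hp hpq => by
    simp only [totalDerivA_X_fJet, totalDerivA_X_gJet, map_add, map_mul, aeval_X]
    exact ⟨.comp_uncurry_of_continuous_partials (hf.hasDerivAt_fst p q ⟨by omega, by omega⟩)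
      (hf.hasDerivAt_snd p q ⟨by omega, by omega⟩)
      (hf.continuous (p + 1) q ⟨by omega, by omega⟩).continuousAt
      (hf.continuous p (q + 1) ⟨by omega, by omega⟩).continuousAt
      (hg.hasDerivAt_fst 0 0 ⟨by omega, by omega⟩ a z),
    hg.hasDerivAt_fst p q ⟨by omega, by omega⟩ a z⟩) hP

theorem hasDerivAt_aeval_jetEval_snd {i j : ℕ} (hi : i ≤ d) (hij : i + (j + 1) ≤ r)
    {P : JetPoly} (hP : P ∈ jetSubalgebra i j) (a z : ℝ) :
    HasDerivAt (fun z' => aeval (jetEval Df Dg a z') P)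
      (aeval (jetEval Df Dg a z) (totalDerivZ P)) z :=
  hasDerivAt_aeval_of_mem_adjoin totalDerivZ (forall_mem_lowOrderVars fun p q hp hpq => by
    simp only [totalDerivZ_X_fJet, totalDerivZ_X_gJet, map_mul, aeval_X]
    exact ⟨(hf.hasDerivAt_snd p q ⟨by omega, by omega⟩ a _).comp z
      (hg.hasDerivAt_snd 0 0 ⟨by omega, by omega⟩ a z),
    hg.hasDerivAt_snd p q ⟨by omega, by omega⟩ a z⟩) hP

theorem _root_.IsMixedPartials.comp :
    IsMixedPartials (fun i j => i ≤ d ∧ i + j ≤ r) (compPartials Df Dg) where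
  hasDerivAt_fst i j hij a z := by
    simpa only [compPartials, jetPoly_succ_left] using
      hasDerivAt_aeval_jetEval_fst hf hg hij.1 hij.2 (jetPoly_mem i j) a z
  hasDerivAt_snd i j hij a z := by
    simpa only [compPartials, jetPoly_succ_right] using
      hasDerivAt_aeval_jetEval_snd hf hg hij.1 hij.2 (jetPoly_mem i j) a z
  continuous i j hij := continuous_aeval_jetEval hf hg hij.1 hij.2 (jetPoly_mem i j)

end Evaluation

end JetComp

end

theorem stmt9_general (d r : ℕ) (f g : ℝ → ℝ → ℝ)
    (hf : ClassA d r f) (hg : ClassA d r g) :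
    ClassA d r (fun a z => f a (g a z)) := by
  obtain ⟨Df, rfl, hDf⟩ := memClass_iff.1 hf
  obtain ⟨Dg, rfl, hDg⟩ := memClass_iff.1 hg
  exact memClass_iff.2 ⟨_, JetComp.compPartials_zero_zero Df Dg, hDf.comp hDg⟩

/-- The Arnold class is closed under composition of families: if `(f_a)_a` and `(g_a)_a`
belong to `C^{d,r}_A`, then so does the composed family `(f_a ∘ g_a)_a`. -/
theorem stmt9 (d r : ℕ) (hdr : d ≤ r) (f g : ℝ → ℝ → ℝ)
    (hf : ClassA d r f) (hg : ClassA d r g) :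
    ClassA d r (fun a z => f a (g a z)) :=
  stmt9_general d r f g hf hg
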